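/- arXiv:0807.0058 — 2 statements merged into one kernel-verified Lean document; each statement's English description precedes it below -/
import Mathlib

section
/- Given a closed 2-form ω ∈ Ω²(M) and a group homomorphism χ : Z₁(M) → ℝ/ℤ satisfying χ(∂S) = ∫_S ω mod ℤ for all smooth 2-chains S, the pair (ω, χ) arises from a degree-2 cocycle of DC•₂(M): choosing any real lift h ∈ C¹(M, ℝ) of χ (extended to all 1-chains), the cochain c := ω − dh takes integer values on all smooth 2-chains. -/
/-- given a closed 2-form `ω` and a homomorphism
`χ : Z₁(M) → ℝ/ℤ` with `χ (∂S) = ∫_S ω mod ℤ` for all smooth 2-chains `S`,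
the pair `(ω, χ)` arises from a degree-2 cocycle of `DC•₂(M)`: for any real
lift `h ∈ C¹(M, ℝ)` of `χ` (i.e. `h ≡ χ (mod ℤ)` on 1-cycles, extended to all
1-chains), the cochain `c := ω − dh`, i.e. `S ↦ ∫_S ω − h (∂S)`, takes integer
values on all smooth 2-chains.

Abstract model of the smooth singular chain complex of the manifold `M`:
`Ch n` smooth singular `n`-chains with boundary `bd`; `Om n` differential
`n`-forms with differential `dOm`; `intg` integration of forms over chains;
`Z₁(M)` is the kernel of `bd 0 : Ch 1 →+ Ch 0`; `ℝ/ℤ = AddCircle 1`. -/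
theorem stmt4
    (Ch : ℕ → Type*) [∀ n, AddCommGroup (Ch n)]
    (bd : ∀ n, Ch (n+1) →+ Ch n)
    (hbd : ∀ n (x : Ch (n+2)), bd n (bd (n+1) x) = 0)
    (Om : ℕ → Type*) [∀ n, AddCommGroup (Om n)]
    (dOm : ∀ n, Om n →+ Om (n+1))
    (intg : ∀ n, Om n →+ (Ch n →+ ℝ))
    (ω : Om 2) (hω : dOm 2 ω = 0)
    (χ : (bd 0).ker →+ AddCircle (1 : ℝ))
    (hχ : ∀ S : Ch 2,
      χ ⟨bd 1 S, by simpa [AddMonoidHom.mem_ker] using hbd 0 S⟩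
        = ((intg 2 ω S : ℝ) : AddCircle (1 : ℝ)))
    (h : Ch 1 →+ ℝ)
    (hlift : ∀ z : (bd 0).ker,
      ((h (z : Ch 1) : ℝ) : AddCircle (1 : ℝ)) = χ z) :
    ∀ S : Ch 2, ∃ k : ℤ, intg 2 ω S - h (bd 1 S) = (k : ℝ) := by
  intro S
  have hz : ((h (bd 1 S) : ℝ) : AddCircle (1 : ℝ))
      = ((intg 2 ω S : ℝ) : AddCircle (1 : ℝ)) := by
    rw [← hχ S]
    exact hlift ⟨bd 1 S, by simpa [AddMonoidHom.mem_ker] using hbd 0 S⟩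
  have := (QuotientAddGroup.eq_iff_sub_mem).mp hz.symm
  rw [AddSubgroup.mem_zmultiples_iff] at this
  obtain ⟨k, hk⟩ := this
  exact ⟨k, by simpa using hk.symm⟩
end

section
/- The set of differential characters of degree 2 on a manifold M, i.e. pairs (ω, χ) with ω a closed 2-form and χ : Z₁(M) → ℝ/ℤ a homomorphism with χ(∂S) ≡ ∫_S ω (mod ℤ) for all 2-chains S, forms an abelian group under componentwise addition, and the map (ω, χ) ↦ ω is a group homomorphism onto the group of closed 2-forms with integral periods whose kernel is the group of homomorphisms H₁(M) → ℝ/ℤ (characters vanishing on boundaries with ω = 0). -/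
/-- the set of degree-2 differential characters on `M` — pairs
`(ω, χ)` with `ω` a closed 2-form and `χ : Z₁(M) → ℝ/ℤ` a homomorphism with
`χ (∂S) ≡ ∫_S ω (mod ℤ)` for all 2-chains `S` — forms an abelian group under
componentwise addition (i.e. it is the carrier of an additive subgroup `K` of
the product); the projection `(ω, χ) ↦ ω` is a group homomorphism whose image
is exactly the closed 2-forms with integral periods, and whose kernel
(`K ⊓ ker fst`, the characters with `ω = 0`, which vanish on boundaries) is
isomorphic to the group of homomorphisms `H₁(M) = Z₁(M)/B₁(M) → ℝ/ℤ`.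

Abstract model of the smooth singular chain complex of the manifold `M`:
`Ch n` smooth singular `n`-chains with boundary `bd`; `Om n` differential
`n`-forms with differential `dOm`; `intg` integration of forms over chains;
`Z₁(M) = ker (bd 0)`, `B₁(M) = range (bd 1)`; `ℝ/ℤ = AddCircle 1`. -/
theorem stmt5
    (Ch : ℕ → Type*) [∀ n, AddCommGroup (Ch n)]
    (bd : ∀ n, Ch (n+1) →+ Ch n)
    (hbd : ∀ n (x : Ch (n+2)), bd n (bd (n+1) x) = 0)
    (Om : ℕ → Type*) [∀ n, AddCommGroup (Om n)]
    (dOm : ∀ n, Om n →+ Om (n+1))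
    (intg : ∀ n, Om n →+ (Ch n →+ ℝ))
    (hStokes : ∀ n (η : Om n) (S : Ch (n+1)),
      intg (n+1) (dOm n η) S = intg n η (bd n S)) :
    ∃ K : AddSubgroup (Om 2 × ((bd 0).ker →+ AddCircle (1 : ℝ))),
      -- K is the set of differential characters:
      ((K : Set (Om 2 × ((bd 0).ker →+ AddCircle (1 : ℝ))))
        = {p | dOm 2 p.1 = 0 ∧
            ∀ S : Ch 2,
              p.2 ⟨bd 1 S, by simpa [AddMonoidHom.mem_ker] using hbd 0 S⟩
                = ((intg 2 p.1 S : ℝ) : AddCircle (1 : ℝ))}) ∧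
      -- the image of the projection hom `fst` is the closed 2-forms with
      -- integral periods:
      (Prod.fst '' (K : Set (Om 2 × ((bd 0).ker →+ AddCircle (1 : ℝ))))
        = {ω | dOm 2 ω = 0 ∧
            ∀ S : Ch 2, bd 1 S = 0 → ∃ k : ℤ, intg 2 ω S = (k : ℝ)}) ∧
      -- the kernel of the projection is `Hom(H₁(M), ℝ/ℤ)`:
      Nonempty
        ((↥(K ⊓ (AddMonoidHom.fst (Om 2) ((bd 0).ker →+ AddCircle (1 : ℝ))).ker))
          ≃+
         (((bd 0).ker ⧸ ((bd 1).range.addSubgroupOf (bd 0).ker))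
            →+ AddCircle (1 : ℝ))) := by
  classical
  let β : Ch 2 →+ (bd 0).ker :=
    (bd 1).codRestrict (bd 0).ker
      (fun S => by simpa [AddMonoidHom.mem_ker] using hbd 0 S)
  let B' : AddSubgroup (bd 0).ker := (bd 1).range.addSubgroupOf (bd 0).ker
  let qm : ℝ →+ AddCircle (1 : ℝ) := QuotientAddGroup.mk' _
  let Φ : (Om 2 × ((bd 0).ker →+ AddCircle (1 : ℝ))) →+
      (Om 3 × (Ch 2 →+ AddCircle (1 : ℝ))) :=
    AddMonoidHom.mk'
      (fun p => (dOm 2 p.1, p.2.comp β - qm.comp (intg 2 p.1)))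
      (by
        intro p q
        refine Prod.ext (by simp) ?_
        ext S
        simp [AddMonoidHom.add_comp, map_add]
        abel)
  have hK : ∀ p, p ∈ Φ.ker ↔ (dOm 2 p.1 = 0 ∧
      ∀ S : Ch 2, p.2 (β S) = ((intg 2 p.1 S : ℝ) : AddCircle (1 : ℝ))) := by
    intro p
    rw [AddMonoidHom.mem_ker]
    have hΦ : Φ p = (dOm 2 p.1, p.2.comp β - qm.comp (intg 2 p.1)) := rfl
    rw [hΦ, Prod.mk_eq_zero]
    refine and_congr Iff.rfl ?_
    rw [sub_eq_zero, AddMonoidHom.ext_iff]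
    rfl
  refine ⟨Φ.ker, ?_, ?_, ?_⟩
  · ext p
    exact hK p
  · ext ω
    constructor
    · rintro ⟨p, hp, rfl⟩
      obtain ⟨hc, hper⟩ := (hK p).mp hp
      refine ⟨hc, fun S hS => ?_⟩
      have h := (hper S).symm
      have hβ : β S = 0 := by ext; simp [β, hS]
      rw [hβ, map_zero] at h
      obtain ⟨k, hk⟩ := (AddCircle.coe_eq_zero_iff (1 : ℝ)).mp h
      exact ⟨k, by simpa using hk.symm⟩
    · rintro ⟨hc, hper⟩
      let g : Ch 2 →+ AddCircle (1 : ℝ) := qm.comp (intg 2 ω)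
      have hker : (bd 1).ker ≤ g.ker := by
        intro S hS
        obtain ⟨k, hk⟩ := hper S hS
        show ((intg 2 ω S : ℝ) : AddCircle (1 : ℝ)) = 0
        rw [AddCircle.coe_eq_zero_iff]
        exact ⟨k, by simpa using hk.symm⟩
      let gbar : Ch 2 ⧸ (bd 1).ker →+ AddCircle (1 : ℝ) :=
        QuotientAddGroup.lift _ g hker
      let e : Ch 2 ⧸ (bd 1).ker ≃+ (bd 1).range :=
        QuotientAddGroup.quotientKerEquivRange (bd 1)
      let incl : B' →+ (bd 1).range := AddMonoidHom.mk'
        (fun b => ⟨(b : (bd 0).ker), AddSubgroup.mem_addSubgroupOf.mp b.2⟩)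
        (fun a b => by ext; rfl)
      let f₀ : B' →+ AddCircle (1 : ℝ) :=
        gbar.comp ((e.symm.toAddMonoidHom).comp incl)
      obtain ⟨χ, hχ⟩ := (Module.Baer.of_divisible
          (AddCircle (1 : ℝ))).extension_property_addMonoidHom
          B'.subtype Subtype.val_injective f₀
      refine ⟨(ω, χ), (hK (ω, χ)).mpr ⟨hc, fun S => ?_⟩, rfl⟩
      have hmem : β S ∈ B' := AddSubgroup.mem_addSubgroupOf.mpr ⟨S, rfl⟩
      have h1 : χ (β S) = f₀ ⟨β S, hmem⟩ := by
        have := DFunLike.congr_fun hχ ⟨β S, hmem⟩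
        simpa using this
      rw [h1]
      show gbar (e.symm (incl ⟨β S, hmem⟩)) = _
      have he : e.symm (incl ⟨β S, hmem⟩) = ((S : Ch 2 ⧸ (bd 1).ker)) := by
        rw [AddEquiv.symm_apply_eq]
        ext
        rfl
      rw [he]
      rfl
  · have hvan : ∀ (x : ↥(Φ.ker ⊓ (AddMonoidHom.fst (Om 2)
        ((bd 0).ker →+ AddCircle (1 : ℝ))).ker)) (b : (bd 0).ker),
        b ∈ B' → x.1.2 b = 0 := by
      rintro x b hb
      obtain ⟨S, hS⟩ := AddSubgroup.mem_addSubgroupOf.mp hb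
      have hb' : b = β S := by ext; exact hS.symm
      have h0 : x.1.1 = 0 := x.2.2
      have h2 := ((hK x.1).mp x.2.1).2 S
      rw [hb', h2, h0]
      simp
    let F : ↥(Φ.ker ⊓ (AddMonoidHom.fst (Om 2)
        ((bd 0).ker →+ AddCircle (1 : ℝ))).ker) →+
        (((bd 0).ker ⧸ B') →+ AddCircle (1 : ℝ)) :=
      AddMonoidHom.mk'
        (fun x => QuotientAddGroup.lift B' x.1.2 (hvan x))
        (by
          intro x y
          ext z
          rfl)
    let G : (((bd 0).ker ⧸ B') →+ AddCircle (1 : ℝ)) →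
        ↥(Φ.ker ⊓ (AddMonoidHom.fst (Om 2)
          ((bd 0).ker →+ AddCircle (1 : ℝ))).ker) := fun f =>
      ⟨(0, f.comp (QuotientAddGroup.mk' B')), ⟨(hK _).mpr ⟨map_zero _, fun S => by
        have h3 : (QuotientAddGroup.mk' B') (β S) = 0 := by
          rw [QuotientAddGroup.mk'_apply, QuotientAddGroup.eq_zero_iff]
          exact AddSubgroup.mem_addSubgroupOf.mpr ⟨S, rfl⟩
        have h4 : f ((QuotientAddGroup.mk' B') (β S)) = 0 := by
          rw [h3, map_zero]
        simpa using h4⟩, rfl⟩⟩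
    have hGF : ∀ x, G (F x) = x := by
      intro x
      ext : 1
      refine Prod.ext (x.2.2).symm ?_
      ext z
      rfl
    have hFG : ∀ f, F (G f) = f := by
      intro f
      ext z
      rfl
    exact ⟨{ toFun := F
             invFun := G
             left_inv := hGF
             right_inv := hFG
             map_add' := F.map_add }⟩
end
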